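/- Let n ≥ 1, let g be a real symmetric positive definite n×n matrix, and let L be a real n×n matrix such that gL is symmetric and such that every real eigenvalue μ of L satisfies |μ| ≤ 1/ρ, where ρ > 0. Fix ε ∈ [0, ρ) and t ∈ [−1,1], and set G := g (I − εtL)². Then G is invertible and its inverse satisfies (1 + ε/ρ)^{−2} g^{−1} ≼ G^{−1} ≼ (1 − ε/ρ)^{−2} g^{−1} in the Loewner order. -/

import Mathlib

open Matrix
open scoped MatrixOrder

/-! With `R = √g`, the matrix `A = R L R⁻¹` is symmetric because `g L` is, and it is similar to `L`,
so its spectrum lies in `[-1/ρ, 1/ρ]`. Then `G = R (1 - εtA)² R`, the functional calculus of `A`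
places `(1 - εtA)⁻²` between the scalars `(1 + ε/ρ)⁻²` and `(1 - ε/ρ)⁻²`, and conjugating these
bounds by `R⁻¹` turns them into the bounds relative to `g⁻¹ = R⁻¹ R⁻¹`. -/

theorem sq_one_sub_mem_Icc_of_abs_le {y δ : ℝ} (hy : |y| ≤ δ) (hδ : δ ≤ 1) :
    (1 - y) ^ 2 ∈ Set.Icc ((1 - δ) ^ 2) ((1 + δ) ^ 2) := by
  obtain ⟨hy₁, hy₂⟩ := abs_le.mp hy
  constructor <;> nlinarith

namespace Matrix

variable {ι : Type*} [Fintype ι] [DecidableEq ι]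

theorem exists_mulVec_eq_smul_of_mem_spectrum {K : Type*} [Field K] {M : Matrix ι ι K} {μ : K}
    (hμ : μ ∈ spectrum K M) : ∃ x ≠ 0, M *ᵥ x = μ • x := by
  rw [← spectrum_toLin', ← Module.End.hasEigenvalue_iff_mem_spectrum] at hμ
  obtain ⟨x, hx⟩ := hμ.exists_hasEigenvector
  exact ⟨x, hx.2, by simpa using hx.apply_eq_smul⟩

section CommRing

variable {α : Type*} [CommRing α] {R M : Matrix ι ι α}

theorem spectrum_mul_mul_inv (hR : IsUnit R) : spectrum α (R * M * R⁻¹) = spectrum α M := by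
  obtain ⟨u, rfl⟩ := hR
  rw [← coe_units_inv, spectrum.units_conjugate]

theorem mul_self_mul_pow (hR : IsUnit R) (k : ℕ) : R * R * M ^ k = R * (R * M * R⁻¹) ^ k * R := by
  obtain ⟨u, rfl⟩ := hR
  rw [← coe_units_inv, Units.conj_pow]
  simp [mul_assoc]

theorem mul_one_sub_smul_mul_inv (hR : IsUnit R) (s : α) :
    R * (1 - s • M) * R⁻¹ = 1 - s • (R * M * R⁻¹) := by
  rw [mul_sub, sub_mul, mul_one, mul_nonsing_inv R ((isUnit_iff_isUnit_det R).mp hR),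
    mul_smul_comm, smul_mul_assoc]

theorem IsHermitian.mul_mul_inv [StarRing α] (hR : R.IsHermitian) (hRu : IsUnit R)
    (hRRM : (R * R * M).IsHermitian) : (R * M * R⁻¹).IsHermitian := by
  have hconj : R * M * R⁻¹ = (R⁻¹)ᴴ * (R * R * M) * R⁻¹ := by
    rw [conjTranspose_nonsing_inv, hR.eq, mul_assoc R R M,
      nonsing_inv_mul_cancel_left _ _ ((isUnit_iff_isUnit_det R).mp hRu)]
  rw [hconj]
  exact isHermitian_conjTranspose_mul_mul _ hRRM

end CommRing

section RCLike

variable {𝕜 : Type*} [RCLike 𝕜]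

theorem IsHermitian.isUnit_cfc_and_inv_cfc_mem_Icc {A : Matrix ι ι 𝕜} (hA : A.IsHermitian)
    {f : ℝ → ℝ} {a b : ℝ} (ha : 0 < a) (hf : ∀ x ∈ spectrum ℝ A, f x ∈ Set.Icc a b) :
    IsUnit (cfc f A) ∧ (cfc f A)⁻¹ ∈ Set.Icc (algebraMap ℝ _ b⁻¹) (algebraMap ℝ _ a⁻¹) := by
  have hcont : ∀ h : ℝ → ℝ, ContinuousOn h (spectrum ℝ A) := A.finite_real_spectrum.continuousOn
  have hpos : ∀ x ∈ spectrum ℝ A, 0 < f x := fun x hx => ha.trans_le (hf x hx).1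
  have hne : ∀ x ∈ spectrum ℝ A, f x ≠ 0 := fun x hx => (hpos x hx).ne'
  have hinv : (cfc f A)⁻¹ = cfc (fun x => (f x)⁻¹) A := by
    rw [nonsing_inv_eq_ringInverse]
    exact (cfc_inv f A hne (hcont f) hA).symm
  refine ⟨isUnit_cfc f A (hcont f) hA hne, hinv ▸ ⟨?_, ?_⟩⟩
  · exact algebraMap_le_cfc _ _ _ (fun x hx => inv_anti₀ (hpos x hx) (hf x hx).2) (hcont _) hA
  · exact cfc_le_algebraMap _ _ _ (fun x hx => inv_anti₀ ha (hf x hx).1) (hcont _) hA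

theorem IsHermitian.isUnit_one_sub_smul_sq_and_inv_mem_Icc {A : Matrix ι ι 𝕜}
    (hA : A.IsHermitian) {s δ : ℝ} (hδ : δ < 1) (hs : ∀ x ∈ spectrum ℝ A, |s * x| ≤ δ) :
    IsUnit ((1 - s • A) ^ 2) ∧ ((1 - s • A) ^ 2)⁻¹ ∈
      Set.Icc (algebraMap ℝ _ ((1 + δ) ^ 2)⁻¹) (algebraMap ℝ _ ((1 - δ) ^ 2)⁻¹) := by
  have hcfc : (1 - s • A) ^ 2 = cfc (fun x => (1 - s * x) ^ 2) A := by
    rw [cfc_pow (fun x => 1 - s * x) 2 A, cfc_sub (fun _ => 1) (fun x => s * x) A,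
      cfc_const_one ℝ A, cfc_const_mul_id s A]
  rw [hcfc]
  exact hA.isUnit_cfc_and_inv_cfc_mem_Icc (pow_pos (sub_pos.2 hδ) 2)
    fun x hx => sq_one_sub_mem_Icc_of_abs_le (hs x hx) hδ.le

theorem IsHermitian.inv_mul_mul_mem_Icc {R P : Matrix ι ι 𝕜} (hR : R.IsHermitian) {a b : ℝ}
    (hP : P⁻¹ ∈ Set.Icc (algebraMap ℝ _ a) (algebraMap ℝ _ b)) :
    (R * P * R)⁻¹ ∈ Set.Icc (a • (R * R)⁻¹) (b • (R * R)⁻¹) := by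
  have hstar : star R⁻¹ = R⁻¹ := by
    rw [star_eq_conjTranspose, conjTranspose_nonsing_inv, hR.eq]
  have hconj : ∀ Q : Matrix ι ι 𝕜, (R * Q * R)⁻¹ = star R⁻¹ * Q⁻¹ * R⁻¹ := fun Q => by
    rw [Matrix.mul_inv_rev, Matrix.mul_inv_rev, ← mul_assoc, hstar]
  have hsmul : ∀ c : ℝ, c • (R * R)⁻¹ = star R⁻¹ * algebraMap ℝ _ c * R⁻¹ := fun c => by
    rw [Matrix.mul_inv_rev, hstar, Algebra.algebraMap_eq_smul_one, mul_smul_comm, smul_mul_assoc,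
      mul_one]
  rw [hconj, hsmul, hsmul]
  exact ⟨star_left_conjugate_le_conjugate hP.1 _, star_left_conjugate_le_conjugate hP.2 _⟩

end RCLike

end Matrix

theorem stmt_9_general (n : ℕ) (ρ : ℝ) (hρ : 0 < ρ)
    (g L : Matrix (Fin n) (Fin n) ℝ)
    (hg : g.PosDef) (hgL : (g * L).IsSymm)
    (hL : ∀ (μ : ℝ) (x : Fin n → ℝ), x ≠ 0 → L.mulVec x = μ • x → |μ| ≤ 1 / ρ)
    (ε t : ℝ) (hε : ε ∈ Set.Ico 0 ρ) (ht : t ∈ Set.Icc (-1 : ℝ) 1) :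
    IsUnit (g * (1 - (ε * t) • L) ^ 2) ∧
    ((g * (1 - (ε * t) • L) ^ 2)⁻¹ - ((1 + ε / ρ) ^ 2)⁻¹ • g⁻¹).PosSemidef ∧
    (((1 - ε / ρ) ^ 2)⁻¹ • g⁻¹ - (g * (1 - (ε * t) • L) ^ 2)⁻¹).PosSemidef := by
  obtain ⟨hε0, hερ⟩ := hε
  have hR : IsStrictlyPositive (CFC.sqrt g) := (isStrictlyPositive_iff_posDef.2 hg).sqrt
  set R := CFC.sqrt g
  have hRR : R * R = g := CFC.sqrt_mul_sqrt_self g hg.posSemidef.nonneg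
  have hRu : IsUnit R := hR.isUnit
  set A := R * L * R⁻¹
  have hA : A.IsHermitian :=
    IsHermitian.mul_mul_inv hR.isSelfAdjoint hRu (hRR ▸ isHermitian_iff_isSymm.2 hgL)
  have hAspec : ∀ x ∈ spectrum ℝ A, |ε * t * x| ≤ ε / ρ := by
    intro x hx
    rw [spectrum_mul_mul_inv hRu] at hx
    obtain ⟨v, hv, hLv⟩ := exists_mulVec_eq_smul_of_mem_spectrum hx
    calc |ε * t * x| = ε * |t| * |x| := by rw [abs_mul, abs_mul, abs_of_nonneg hε0]
      _ ≤ ε * 1 * (1 / ρ) := by gcongr; exacts [abs_le.2 ht, hL x v hv hLv]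
      _ = ε / ρ := by ring
  obtain ⟨hPu, hPinv⟩ :=
    hA.isUnit_one_sub_smul_sq_and_inv_mem_Icc ((div_lt_one hρ).2 hερ) hAspec
  have hG : g * (1 - (ε * t) • L) ^ 2 = R * (1 - (ε * t) • A) ^ 2 * R := by
    rw [← hRR, mul_self_mul_pow hRu, mul_one_sub_smul_mul_inv hRu]
  obtain ⟨hlow, hupp⟩ := IsHermitian.inv_mul_mul_mem_Icc hR.isSelfAdjoint hPinv
  rw [← hG, hRR] at hlow hupp
  exact ⟨hG ▸ (hRu.mul hPu).mul hRu, hlow, hupp⟩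

theorem stmt_9 (n : ℕ) (hn : 1 ≤ n) (ρ : ℝ) (hρ : 0 < ρ)
    (g L : Matrix (Fin n) (Fin n) ℝ)
    (hg : g.PosDef) (hgL : (g * L).IsSymm)
    (hL : ∀ (μ : ℝ) (x : Fin n → ℝ), x ≠ 0 → L.mulVec x = μ • x → |μ| ≤ 1 / ρ)
    (ε t : ℝ) (hε : ε ∈ Set.Ico 0 ρ) (ht : t ∈ Set.Icc (-1 : ℝ) 1) :
    IsUnit (g * (1 - (ε * t) • L) ^ 2) ∧
    ((g * (1 - (ε * t) • L) ^ 2)⁻¹ - ((1 + ε / ρ) ^ 2)⁻¹ • g⁻¹).PosSemidef ∧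
    (((1 - ε / ρ) ^ 2)⁻¹ • g⁻¹ - (g * (1 - (ε * t) • L) ^ 2)⁻¹).PosSemidef :=
  stmt_9_general n ρ hρ g L hg hgL hL ε t hε ht
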